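/- Let Ω ⊂ ℝ³ be a smooth bounded domain, τ > 0, and b ∈ ℝ. Let B : ℝ → ℝ be nondecreasing with B(0) = 0 and B(r) > 0 for every r > 0. Let w ∈ L²(Ω) with w ≤ b a.e. in Ω, let v ∈ H¹(Ω) be such that B((v − w)/τ) ∈ L²(Ω), and let f ∈ L²(Ω) with f ≤ 0 a.e. on the set {x ∈ Ω : v(x) > b}. Assume that v is a weak solution of the Neumann problem B((v − w)/τ) − Δv = f, i.e., ∫_Ω B((v − w)/τ) φ + ∫_Ω ∇v·∇φ = ∫_Ω f φ for every φ ∈ H¹(Ω). Then v ≤ b a.e. in Ω. -/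

import Mathlib

open MeasureTheory

/-!
Test the weak formulation with the truncation `(v - b)⁺`. The gradient term becomes
`∫_{v > b} |∇v|² ≥ 0` and the source term `∫ f (v - b)⁺ ≤ 0`, so `∫ B((v - w)/τ) (v - b)⁺ ≤ 0`.
On `{v > b}` we have `v - w > 0` (as `w ≤ b`), so this integrand is nonnegative and vanishes
only where `v ≤ b`; hence `v ≤ b` a.e.
-/

section Truncation

variable {α E : Type*} [MeasurableSpace α] {μ : Measure α}
  [NormedAddCommGroup E] [InnerProductSpace ℝ E]

theorem integral_inner_truncation_nonneg (v : α → ℝ) (gv : α → E) (b : ℝ) :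
    0 ≤ ∫ x, (inner ℝ (gv x) (if b < v x then gv x else 0) : ℝ) ∂μ := by
  refine integral_nonneg fun x => ?_
  split_ifs
  · exact real_inner_self_nonneg
  · simp

theorem integral_mul_truncation_nonpos {v f : α → ℝ} {b : ℝ}
    (hf : ∀ᵐ x ∂μ, b < v x → f x ≤ 0) :
    ∫ x, f x * max (v x - b) 0 ∂μ ≤ 0 := by
  refine integral_nonpos_of_ae ?_
  filter_upwards [hf] with x hx
  rcases lt_or_ge b (v x) with hbv | hvb
  · exact mul_nonpos_of_nonpos_of_nonneg (hx hbv) (le_max_right _ _)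
  · simp [max_eq_right (sub_nonpos.mpr hvb)]

theorem ae_le_of_integral_mul_truncation_nonpos {v c : α → ℝ} {b : ℝ}
    (hc : ∀ᵐ x ∂μ, b < v x → 0 < c x)
    (hint : Integrable (fun x => c x * max (v x - b) 0) μ)
    (hle : ∫ x, c x * max (v x - b) 0 ∂μ ≤ 0) :
    ∀ᵐ x ∂μ, v x ≤ b := by
  have hnonneg : 0 ≤ᵐ[μ] fun x => c x * max (v x - b) 0 := by
    filter_upwards [hc] with x hx
    rcases lt_or_ge b (v x) with hbv | hvb
    · exact mul_nonneg (hx hbv).le (le_max_right _ _)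
    · simp [max_eq_right (sub_nonpos.mpr hvb)]
  have hzero : (fun x => c x * max (v x - b) 0) =ᵐ[μ] 0 :=
    (integral_eq_zero_iff_of_nonneg_ae hnonneg hint).mp
      (le_antisymm hle (integral_nonneg_of_ae hnonneg))
  filter_upwards [hzero, hc] with x hx0 hx
  by_contra! hbv
  have : 0 < c x * max (v x - b) 0 :=
    mul_pos (hx hbv) (lt_max_of_lt_left (sub_pos.mpr hbv))
  exact this.ne' hx0

end Truncation

theorem rothe_step_maximum_principle_general
    (Ω : Set (EuclideanSpace ℝ (Fin 3)))
    (τ : ℝ) (hτ : 0 < τ) (b : ℝ)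
    (B : ℝ → ℝ)
    (hBpos : ∀ r : ℝ, 0 < r → 0 < B r)
    -- the abstract Sobolev space `H¹(Ω)`: pairs (function, weak gradient)
    (Sob : Set ((EuclideanSpace ℝ (Fin 3) → ℝ) × (EuclideanSpace ℝ (Fin 3) → EuclideanSpace ℝ (Fin 3))))
    (hSobL2 : ∀ p ∈ Sob, MemLp p.1 2 (volume.restrict Ω) ∧ MemLp p.2 2 (volume.restrict Ω))
    (w : EuclideanSpace ℝ (Fin 3) → ℝ)
    (hwb : ∀ᵐ x ∂(volume.restrict Ω), w x ≤ b)
    (v : EuclideanSpace ℝ (Fin 3) → ℝ)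
    (gv : EuclideanSpace ℝ (Fin 3) → EuclideanSpace ℝ (Fin 3))
    (hBvL2 : MemLp (fun x => B ((v x - w x) / τ)) 2 (volume.restrict Ω))
    -- `H¹(Ω)` is stable under the truncation `v ↦ (v − b)⁺`
    (htrunc : ((fun x => max (v x - b) 0),
               (fun x => if b < v x then gv x else 0)) ∈ Sob)
    (f : EuclideanSpace ℝ (Fin 3) → ℝ)
    (hfneg : ∀ᵐ x ∂(volume.restrict Ω), b < v x → f x ≤ 0)
    -- weak formulation of `B((v − w)/τ) − Δv = f`, `∂_n v = 0 on ∂Ω`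
    (hweak : ∀ p ∈ Sob,
      (∫ x, B ((v x - w x) / τ) * p.1 x ∂(volume.restrict Ω)) +
      (∫ x, (inner ℝ (gv x) (p.2 x) : ℝ) ∂(volume.restrict Ω)) =
      ∫ x, f x * p.1 x ∂(volume.restrict Ω)) :
    ∀ᵐ x ∂(volume.restrict Ω), v x ≤ b := by
  have htested := hweak _ htrunc
  refine ae_le_of_integral_mul_truncation_nonpos (c := fun x => B ((v x - w x) / τ)) ?_
    (hBvL2.integrable_mul (hSobL2 _ htrunc).1) ?_
  · filter_upwards [hwb] with x hwx hbv
    exact hBpos _ (div_pos (by linarith) hτ)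
  · linarith [integral_inner_truncation_nonneg (μ := volume.restrict Ω) v gv b,
      integral_mul_truncation_nonpos hfneg]

theorem rothe_step_maximum_principle
    (Ω : Set (EuclideanSpace ℝ (Fin 3)))
    (hΩopen : IsOpen Ω) (hΩbdd : Bornology.IsBounded Ω)
    (τ : ℝ) (hτ : 0 < τ) (b : ℝ)
    (B : ℝ → ℝ) (hBmono : Monotone B) (hB0 : B 0 = 0)
    (hBpos : ∀ r : ℝ, 0 < r → 0 < B r)
    -- the abstract Sobolev space `H¹(Ω)`: pairs (function, weak gradient)
    (Sob : Set ((EuclideanSpace ℝ (Fin 3) → ℝ) × (EuclideanSpace ℝ (Fin 3) → EuclideanSpace ℝ (Fin 3))))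
    (hSobL2 : ∀ p ∈ Sob, MemLp p.1 2 (volume.restrict Ω) ∧ MemLp p.2 2 (volume.restrict Ω))
    (w : EuclideanSpace ℝ (Fin 3) → ℝ)
    (hwL2 : MemLp w 2 (volume.restrict Ω))
    (hwb : ∀ᵐ x ∂(volume.restrict Ω), w x ≤ b)
    (v : EuclideanSpace ℝ (Fin 3) → ℝ)
    (gv : EuclideanSpace ℝ (Fin 3) → EuclideanSpace ℝ (Fin 3))
    (hv : (v, gv) ∈ Sob)
    (hBvL2 : MemLp (fun x => B ((v x - w x) / τ)) 2 (volume.restrict Ω))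
    -- `H¹(Ω)` is stable under the truncation `v ↦ (v − b)⁺`
    (htrunc : ((fun x => max (v x - b) 0),
               (fun x => if b < v x then gv x else 0)) ∈ Sob)
    (f : EuclideanSpace ℝ (Fin 3) → ℝ)
    (hfL2 : MemLp f 2 (volume.restrict Ω))
    (hfneg : ∀ᵐ x ∂(volume.restrict Ω), b < v x → f x ≤ 0)
    -- weak formulation of `B((v − w)/τ) − Δv = f`, `∂_n v = 0 on ∂Ω`
    (hweak : ∀ p ∈ Sob,
      (∫ x, B ((v x - w x) / τ) * p.1 x ∂(volume.restrict Ω)) +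
      (∫ x, (inner ℝ (gv x) (p.2 x) : ℝ) ∂(volume.restrict Ω)) =
      ∫ x, f x * p.1 x ∂(volume.restrict Ω)) :
    ∀ᵐ x ∂(volume.restrict Ω), v x ≤ b :=
  rothe_step_maximum_principle_general Ω τ hτ b B hBpos Sob hSobL2 w hwb v gv hBvL2 htrunc f hfneg
    hweak
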